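/- Let G be a group acting on a simplicial set X by simplicial automorphisms such that the action on Xₘ is free for every m, and let q : X → X/G be the degreewise quotient map. Then there exist a G-equivariant simplicial map c̃ : X → E G and a simplicial map c : X/G → B G such that the square with top map c̃ : X → E G, left map q : X → X/G, right map the quotient projection E G → B G, and bottom map c : X/G → B G commutes and is a pullback square in the category of simplicial sets. -/

import Mathlib

open CategoryTheory Simplicial Opposite

/-- An action of a group `G` on a simplicial set `X` by simplicial automorphisms. -/
structure SSetAction (G : Type) [Group G] (X : SSet.{0}) where
  smul : ∀ ⦃m : SimplexCategoryᵒᵖ⦄, G → X.obj m → X.obj m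
  one_smul : ∀ ⦃m : SimplexCategoryᵒᵖ⦄ (x : X.obj m), smul 1 x = x
  mul_smul : ∀ ⦃m : SimplexCategoryᵒᵖ⦄ (g h : G) (x : X.obj m),
    smul (g * h) x = smul g (smul h x)
  map_smul : ∀ ⦃m m' : SimplexCategoryᵒᵖ⦄ (f : m ⟶ m') (g : G) (x : X.obj m),
    X.map f (smul g x) = smul g (X.map f x)

namespace SSetAction

variable {G : Type} [Group G] {X : SSet.{0}} (σ : SSetAction G X)

/-- The orbit relation of the action, in each simplicial degree. -/
def rel (m : SimplexCategoryᵒᵖ) (x y : X.obj m) : Prop := ∃ g : G, σ.smul g x = y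

/-- The degreewise quotient simplicial set `X/G`. -/
def quotient : SSet.{0} where
  obj m := Quot (σ.rel m)
  map f := TypeCat.ofHom (Quot.lift (fun x => Quot.mk (σ.rel _) (X.map f x))
    (fun x y ⟨g, hg⟩ => Quot.sound ⟨g, by rw [← σ.map_smul, hg]⟩))
  map_id m := by
    ext x
    induction x using Quot.ind
    simp [FunctorToTypes.map_id_apply]
  map_comp f g := by
    ext x
    induction x using Quot.ind
    simp [FunctorToTypes.map_comp_apply]

/-- The quotient map of simplicial sets `X ⟶ X/G`. -/
def quotientHom : X ⟶ σ.quotient where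
  app m := TypeCat.ofHom (fun x => Quot.mk _ x)
  naturality _ _ f := rfl

end SSetAction

/-- The simplicial set `E G`: its `n`-simplices are `G^{n+1}`, with faces deleting
coordinates and degeneracies repeating coordinates. -/
def ESet (G : Type) : SSet.{0} where
  obj m := Fin (m.unop.len + 1) → G
  map f := TypeCat.ofHom (fun x => x ∘ f.unop.toOrderHom)
  map_id m := by ext x; rfl
  map_comp f g := by ext x; rfl

/-- The diagonal action of `G` on `E G` by left multiplication. -/
def EAction (G : Type) [Group G] : SSetAction G (ESet G) where
  smul m g x := fun i => g * (show Fin (m.unop.len + 1) → G from x) i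
  one_smul m x := by funext i; exact one_mul _
  mul_smul m g h x := by funext i; exact mul_assoc _ _ _
  map_smul m m' f g x := rfl


/-!
Freeness lets us label every vertex `x` by the unique `g` with `g • r = x`, where `r` is a
chosen representative of the orbit of `x`; this labelling is equivariant, and since `E G` is
0-coskeletal it extends to an equivariant simplicial map `X ⟶ E G`. For any equivariant
map into a simplicial set with a free action, the square formed with the orbit quotients is a
pullback in every degree (lifts exist by translating a representative and are unique by freeness
of the target), and pullbacks of simplicial sets are computed degreewise.
-/

namespace SSetAction

variable {G : Type} [Group G] {X Y : SSet.{0}} (σ : SSetAction G X) (τ : SSetAction G Y)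

def IsFree : Prop :=
  ∀ (m : SimplexCategoryᵒᵖ) (g : G), g ≠ 1 → ∀ x : X.obj m, σ.smul g x ≠ x

lemma rel_equivalence (m : SimplexCategoryᵒᵖ) : Equivalence (σ.rel m) where
  refl x := ⟨1, σ.one_smul x⟩
  symm := fun ⟨g, hg⟩ => ⟨g⁻¹, by rw [← hg, ← σ.mul_smul, inv_mul_cancel, σ.one_smul]⟩
  trans := fun ⟨g, hg⟩ ⟨h, hh⟩ => ⟨h * g, by rw [σ.mul_smul, hg, hh]⟩

lemma quot_mk_eq_iff {m : SimplexCategoryᵒᵖ} {x y : X.obj m} :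
    Quot.mk (σ.rel m) x = Quot.mk (σ.rel m) y ↔ σ.rel m x y :=
  Quot.eq.trans (σ.rel_equivalence m).eqvGen_iff

variable {σ} in
lemma IsFree.smul_left_injective (hσ : σ.IsFree) {m : SimplexCategoryᵒᵖ} (x : X.obj m) :
    Function.Injective (σ.smul · x) := by
  intro g h hgh
  by_contra hne
  refine hσ m (h⁻¹ * g) (fun h1 => hne (inv_mul_eq_one.mp h1).symm) x ?_
  simp only at hgh
  rw [σ.mul_smul, hgh, ← σ.mul_smul, inv_mul_cancel, σ.one_smul]

variable {σ} in
lemma IsFree.exists_equivariant_label (hσ : σ.IsFree) (m : SimplexCategoryᵒᵖ) :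
    ∃ v : X.obj m → G, ∀ g x, v (σ.smul g x) = g * v x := by
  have hrep (x : X.obj m) : σ.rel m (Quot.mk (σ.rel m) x).out x :=
    (σ.quot_mk_eq_iff).mp (Quot.out_eq _)
  choose v hv using hrep
  refine ⟨v, fun g x => hσ.smul_left_injective (Quot.mk (σ.rel m) x).out ?_⟩
  have hquot : Quot.mk (σ.rel m) (σ.smul g x) = Quot.mk (σ.rel m) x :=
    ((σ.quot_mk_eq_iff).mpr ⟨g, rfl⟩).symm
  calc σ.smul (v (σ.smul g x)) (Quot.mk (σ.rel m) x).out
      = σ.smul g x := by rw [← hquot]; exact hv _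
    _ = σ.smul g (σ.smul (v x) (Quot.mk (σ.rel m) x).out) := by rw [hv]
    _ = σ.smul (g * v x) (Quot.mk (σ.rel m) x).out := (σ.mul_smul _ _ _).symm

def IsEquivariant (f : X ⟶ Y) : Prop :=
  ∀ (m : SimplexCategoryᵒᵖ) (g : G) (x : X.obj m), f.app m (σ.smul g x) = τ.smul g (f.app m x)

variable {σ τ}

def quotientMap {f : X ⟶ Y} (hf : IsEquivariant σ τ f) : σ.quotient ⟶ τ.quotient where
  app m := TypeCat.ofHom (Quot.lift (fun x => Quot.mk _ (f.app m x))
    (fun x y ⟨g, hg⟩ => Quot.sound ⟨g, by rw [← hf, hg]⟩))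
  naturality m m' φ := by
    ext x
    induction x using Quot.ind with
    | _ x => exact congrArg (Quot.mk _) (NatTrans.naturality_apply f φ x)

lemma isPullback_quotientMap (hτ : τ.IsFree) {f : X ⟶ Y} (hf : IsEquivariant σ τ f) :
    IsPullback f σ.quotientHom τ.quotientHom (quotientMap hf) := by
  refine IsPullback.of_forall_isPullback_app fun m => ?_
  rw [Limits.Types.isPullback_iff]
  refine ⟨rfl, fun x y ⟨hfxy, hxy⟩ => ?_, fun a b hab => ?_⟩
  · obtain ⟨g, rfl⟩ := (σ.quot_mk_eq_iff).mp hxy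
    have hg : τ.smul g (f.app m x) = τ.smul 1 (f.app m x) := by
      rw [τ.one_smul, ← hf]; exact hfxy.symm
    rw [hτ.smul_left_injective _ hg, σ.one_smul]
  · induction b using Quot.ind with | _ x =>
    obtain ⟨g, rfl⟩ := (τ.quot_mk_eq_iff).mp hab.symm
    exact ⟨σ.smul g x, hf m g x, ((σ.quot_mk_eq_iff).mpr ⟨g, rfl⟩).symm⟩

end SSetAction

lemma isFree_EAction (G : Type) [Group G] : (EAction G).IsFree :=
  fun _ _ hg _ hx => hg (mul_eq_right.mp (congrFun hx 0))

namespace ESet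

variable {G : Type} [Group G] {X : SSet.{0}}

def homOfVertices (v : X.obj (op ⦋0⦌) → G) : X ⟶ ESet G where
  app m := TypeCat.ofHom fun x i => v (X.map (SimplexCategory.const ⦋0⦌ m.unop i).op x)
  naturality m m' φ := by
    ext x
    funext i
    exact congrArg v (Functor.map_comp_apply X φ (SimplexCategory.const ⦋0⦌ m'.unop i).op x).symm

lemma isEquivariant_homOfVertices (σ : SSetAction G X) {v : X.obj (op ⦋0⦌) → G}
    (hv : ∀ g x, v (σ.smul g x) = g * v x) : σ.IsEquivariant (EAction G) (homOfVertices v) :=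
  fun _ g x => funext fun _ => (congrArg v (σ.map_smul _ g x)).trans (hv _ _)

end ESet

/-- If `G` acts freely on a simplicial set `X` in every degree, then there
are a `G`-equivariant simplicial map `c̃ : X ⟶ E G` and a simplicial map
`c : X/G ⟶ B G = (E G)/G` forming a commuting square with the quotient maps which is a
pullback square in the category of simplicial sets. -/
theorem free_quotient_classifying_pullback
    (G : Type) [Group G] (X : SSet.{0}) (σ : SSetAction G X)
    (hfree : ∀ (m : SimplexCategoryᵒᵖ) (g : G), g ≠ 1 → ∀ x : X.obj m, σ.smul g x ≠ x) :
    ∃ (ct : X ⟶ ESet G) (c : σ.quotient ⟶ (EAction G).quotient),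
      (∀ (m : SimplexCategoryᵒᵖ) (g : G) (x : X.obj m),
        ct.app m (σ.smul g x) = (EAction G).smul g (ct.app m x)) ∧
      IsPullback ct σ.quotientHom (EAction G).quotientHom c := by
  obtain ⟨v, hv⟩ := SSetAction.IsFree.exists_equivariant_label hfree (op ⦋0⦌)
  have hct := ESet.isEquivariant_homOfVertices σ hv
  exact ⟨_, _, hct, SSetAction.isPullback_quotientMap (isFree_EAction G) hct⟩
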